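/- arXiv:1910.04581 — 2 statements merged into one kernel-verified Lean document; each statement's English description precedes it below -/
import Mathlib

section
/- Let G and G + g be λ-strongly convex differentiable functions on ℝ^d with λ > 0, and let f₁ be the minimizer of G and f₂ the minimizer of G + g. Then ‖f₁ - f₂‖ ≤ (1/λ) · sup over f of ‖∇g(f)‖, assuming the supremum M = sup_f ‖∇g(f)‖ is finite. -/
/-!
Adding the quadratic growth of the two strongly convex objectives at their minimizers gives
`λ ‖f₁ - f₂‖² ≤ g f₁ - g f₂`, and the gradient bound makes `g` `M`-Lipschitz, so
`λ ‖f₁ - f₂‖² ≤ M ‖f₁ - f₂‖`.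
-/

open Filter Set Topology

lemma StrongConvexOn.add_mul_sq_norm_sub_le_of_isMinOn {E : Type*} [NormedAddCommGroup E]
    [NormedSpace ℝ E] {s : Set E} {m : ℝ} {F : E → ℝ} {x y : E} (hF : StrongConvexOn s m F)
    (hmin : IsMinOn F s x) (hx : x ∈ s) (hy : y ∈ s) :
    F x + m / 2 * ‖x - y‖ ^ 2 ≤ F y := by
  set c := m / 2 * ‖x - y‖ ^ 2 with hc
  -- Compare `F x` with `F` at the point `t • x + (1 - t) • y` of the segment, then let `t → 1`.
  have hsegment : ∀ t ∈ Ioo (0 : ℝ) 1, F x + t * c ≤ F y := by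
    rintro t ⟨ht₀, ht₁⟩
    have hconv := hF.2 hx hy ht₀.le (sub_nonneg.2 ht₁.le) (add_sub_cancel t 1)
    have hmin_t : F x ≤ F (t • x + (1 - t) • y) :=
      hmin (hF.1 hx hy ht₀.le (sub_nonneg.2 ht₁.le) (add_sub_cancel t 1))
    simp only [smul_eq_mul, ← hc] at hconv
    refine le_of_mul_le_mul_left ?_ (sub_pos.2 ht₁)
    linarith
  have hlim : Tendsto (fun t : ℝ ↦ F x + t * c) (𝓝[Ioo 0 1] 1) (𝓝 (F x + 1 * c)) :=
    (Continuous.tendsto (by fun_prop) 1).mono_left nhdsWithin_le_nhds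
  have : (𝓝[Ioo (0 : ℝ) 1] 1).NeBot := right_nhdsWithin_Ioo_neBot one_pos
  simpa using le_of_tendsto hlim (eventually_mem_nhdsWithin.mono hsegment)

lemma norm_sub_le_of_hasGradientAt_of_norm_le {E : Type*} [NormedAddCommGroup E]
    [InnerProductSpace ℝ E] [CompleteSpace E] {g : E → ℝ} {g' : E → E} {M : ℝ}
    (hg : ∀ x, HasGradientAt g (g' x) x) (hM : ∀ x, ‖g' x‖ ≤ M) (x y : E) :
    ‖g x - g y‖ ≤ M * ‖x - y‖ :=
  convex_univ.norm_image_sub_le_of_norm_hasFDerivWithin_le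
    (fun z _ ↦ (hg z).hasFDerivAt.hasFDerivWithinAt)
    (fun z _ ↦ ((InnerProductSpace.toDual ℝ E).norm_map (g' z)).trans_le (hM z))
    (mem_univ y) (mem_univ x)

theorem strongly_convex_argmin_perturbation_general {d : ℕ}
    (G g : EuclideanSpace ℝ (Fin d) → ℝ)
    (g' : EuclideanSpace ℝ (Fin d) → EuclideanSpace ℝ (Fin d))
    (lam M : ℝ) (hlam : 0 < lam)
    (hgdiff : ∀ x, HasGradientAt g (g' x) x)
    (hGsc : ConvexOn ℝ Set.univ (fun x => G x - (lam / 2) * ‖x‖ ^ 2))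
    (hGgsc : ConvexOn ℝ Set.univ (fun x => G x + g x - (lam / 2) * ‖x‖ ^ 2))
    (f₁ f₂ : EuclideanSpace ℝ (Fin d))
    (hf₁ : ∀ x, G f₁ ≤ G x)
    (hf₂ : ∀ x, G f₂ + g f₂ ≤ G x + g x)
    (hM : ∀ f, ‖g' f‖ ≤ M) :
    ‖f₁ - f₂‖ ≤ M / lam := by
  have h₁ : G f₁ + lam / 2 * ‖f₁ - f₂‖ ^ 2 ≤ G f₂ :=
    (strongConvexOn_iff_convex.2 hGsc).add_mul_sq_norm_sub_le_of_isMinOn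
      (fun x _ ↦ hf₁ x) (mem_univ _) (mem_univ _)
  have h₂ : G f₂ + g f₂ + lam / 2 * ‖f₂ - f₁‖ ^ 2 ≤ G f₁ + g f₁ :=
    (strongConvexOn_iff_convex.2 hGgsc).add_mul_sq_norm_sub_le_of_isMinOn (F := G + g)
      (fun x _ ↦ hf₂ x) (mem_univ _) (mem_univ _)
  have hlip := norm_sub_le_of_hasGradientAt_of_norm_le hgdiff hM f₁ f₂
  have hsq : lam * ‖f₁ - f₂‖ ^ 2 ≤ M * ‖f₁ - f₂‖ := by
    rw [norm_sub_rev f₂ f₁] at h₂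
    linarith [le_abs_self (g f₁ - g f₂), Real.norm_eq_abs (g f₁ - g f₂)]
  rcases (norm_nonneg (f₁ - f₂)).eq_or_lt with h0 | hpos
  · rw [← h0]
    exact div_nonneg ((norm_nonneg _).trans (hM 0)) hlam.le
  · rw [le_div_iff₀ hlam]
    nlinarith

theorem strongly_convex_argmin_perturbation {d : ℕ}
    (G g : EuclideanSpace ℝ (Fin d) → ℝ)
    (g' : EuclideanSpace ℝ (Fin d) → EuclideanSpace ℝ (Fin d))
    (lam M : ℝ) (hlam : 0 < lam)
    (hGdiff : Differentiable ℝ G) (hgdiff : ∀ x, HasGradientAt g (g' x) x)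
    (hGsc : ConvexOn ℝ Set.univ (fun x => G x - (lam / 2) * ‖x‖ ^ 2))
    (hGgsc : ConvexOn ℝ Set.univ (fun x => G x + g x - (lam / 2) * ‖x‖ ^ 2))
    (f₁ f₂ : EuclideanSpace ℝ (Fin d))
    (hf₁ : ∀ x, G f₁ ≤ G x)
    (hf₂ : ∀ x, G f₂ + g f₂ ≤ G x + g x)
    (hM : ∀ f, ‖g' f‖ ≤ M) :
    ‖f₁ - f₂‖ ≤ M / lam :=
  strongly_convex_argmin_perturbation_general G g g' lam M hlam hgdiff hGsc hGgsc f₁ f₂ hf₁ hf₂ hM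
end

section
/- Let O_priv(f) = O(f) + εᵀf where O is λ-strongly convex and differentiable, and let f_priv minimize O_priv and f_opt minimize O. Then O(f_priv) - O(f_opt) ≤ ‖ε‖²/λ. -/
open RealInnerProductSpace Filter Topology

section UniformConvex

variable {E : Type*} [NormedAddCommGroup E] [NormedSpace ℝ E] {s : Set E} {φ : ℝ → ℝ}
  {f g : E → ℝ} {x₀ x : E}

/-- Comparing `f x₀` with `f` at `t • x + (1 - t) • x₀` gives
`(1 - t) * φ ‖x - x₀‖ ≤ f x - f x₀` for `t ∈ (0, 1)`; let `t → 0`. -/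
lemma UniformConvexOn.add_le_of_isMinOn (hf : UniformConvexOn s φ f) (hmin : IsMinOn f s x₀)
    (hx₀ : x₀ ∈ s) (hx : x ∈ s) : f x₀ + φ ‖x - x₀‖ ≤ f x := by
  have hseg : ∀ t ∈ Set.Ioo (0 : ℝ) 1, (1 - t) * φ ‖x - x₀‖ ≤ f x - f x₀ := by
    rintro t ⟨ht₀, ht₁⟩
    have hconv := hf.2 hx hx₀ ht₀.le (sub_nonneg.2 ht₁.le) (add_sub_cancel t 1)
    have hle := hmin (hf.1 hx hx₀ ht₀.le (sub_nonneg.2 ht₁.le) (add_sub_cancel t 1))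
    simp only [smul_eq_mul] at hconv
    simp only [Set.mem_ofPred_eq] at hle
    have : t * ((1 - t) * φ ‖x - x₀‖) ≤ t * (f x - f x₀) := by nlinarith
    exact le_of_mul_le_mul_left this ht₀
  have hlim : Tendsto (fun t : ℝ => (1 - t) * φ ‖x - x₀‖) (𝓝[>] 0) (𝓝 (φ ‖x - x₀‖)) := by
    have : Tendsto (fun t : ℝ => (1 - t) * φ ‖x - x₀‖) (𝓝 0) (𝓝 ((1 - 0) * φ ‖x - x₀‖)) :=
      ((continuous_const.sub continuous_id).mul continuous_const).tendsto 0
    simpa using this.mono_left nhdsWithin_le_nhds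
  have := le_of_tendsto hlim (mem_of_superset (Ioo_mem_nhdsGT one_pos) hseg)
  linarith

lemma StrongConvexOn.add_convexOn {m : ℝ} (hf : StrongConvexOn s m f) (hg : ConvexOn ℝ s g) :
    StrongConvexOn s m (f + g) := by
  simpa [StrongConvexOn] using UniformConvexOn.add hf (uniformConvexOn_zero.2 hg)

end UniformConvex

section InnerProduct

variable {E : Type*} [NormedAddCommGroup E] [InnerProductSpace ℝ E] {s : Set E} {f : E → ℝ}
  {m : ℝ} {ε x₀ x₁ : E}

/-- Adding both quadratic-growth inequalities, at `x₀` for `f` and at `x₁` for `f + ⟪ε, ·⟫`,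
gives `m * ‖x₁ - x₀‖ ^ 2 ≤ ⟪ε, x₀ - x₁⟫ ≤ ‖ε‖ * ‖x₁ - x₀‖`. -/
lemma StrongConvexOn.norm_sub_le_of_isMinOn_add_inner (hf : StrongConvexOn s m f) (hm : 0 < m)
    (hx₀ : x₀ ∈ s) (hx₁ : x₁ ∈ s) (hmin₀ : IsMinOn f s x₀)
    (hmin₁ : IsMinOn (fun x => f x + ⟪ε, x⟫) s x₁) : ‖x₁ - x₀‖ ≤ ‖ε‖ / m := by
  have hfε : StrongConvexOn s m (fun x => f x + ⟪ε, x⟫) :=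
    hf.add_convexOn ((innerₛₗ ℝ ε).convexOn hf.1)
  have grow₀ := hf.add_le_of_isMinOn hmin₀ hx₀ hx₁
  have grow₁ := hfε.add_le_of_isMinOn hmin₁ hx₁ hx₀
  have hcs : ⟪ε, x₀ - x₁⟫ ≤ ‖ε‖ * ‖x₁ - x₀‖ := by
    rw [norm_sub_rev]; exact real_inner_le_norm ε (x₀ - x₁)
  have hsq : m * ‖x₁ - x₀‖ * ‖x₁ - x₀‖ ≤ ‖ε‖ * ‖x₁ - x₀‖ := by
    simp only [inner_sub_right, norm_sub_rev x₀ x₁] at grow₀ grow₁ hcs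
    nlinarith
  rcases (norm_nonneg (x₁ - x₀)).eq_or_lt with hzero | hpos
  · rw [← hzero]; positivity
  · rw [le_div_iff₀ hm, mul_comm]
    exact le_of_mul_le_mul_right hsq hpos

end InnerProduct

theorem objective_perturbation_gap_general {d : ℕ}
    (O : EuclideanSpace ℝ (Fin d) → ℝ) (lam : ℝ) (hlam : 0 < lam)
    (hOsc : ConvexOn ℝ Set.univ (fun x => O x - (lam / 2) * ‖x‖ ^ 2))
    (ε f_priv f_opt : EuclideanSpace ℝ (Fin d))
    (hpriv : ∀ f, O f_priv + ⟪ε, f_priv⟫ ≤ O f + ⟪ε, f⟫)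
    (hopt : ∀ f, O f_opt ≤ O f) :
    O f_priv - O f_opt ≤ ‖ε‖ ^ 2 / lam := by
  have hdist : ‖f_priv - f_opt‖ ≤ ‖ε‖ / lam :=
    (strongConvexOn_iff_convex.2 hOsc).norm_sub_le_of_isMinOn_add_inner hlam (Set.mem_univ _)
      (Set.mem_univ _) (isMinOn_univ_iff.2 hopt) (isMinOn_univ_iff.2 hpriv)
  calc O f_priv - O f_opt ≤ ⟪ε, f_opt - f_priv⟫ := by
        rw [inner_sub_right]; linarith [hpriv f_opt]
    _ ≤ ‖ε‖ * ‖f_priv - f_opt‖ := by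
        rw [norm_sub_rev]; exact real_inner_le_norm _ _
    _ ≤ ‖ε‖ * (‖ε‖ / lam) := by gcongr
    _ = ‖ε‖ ^ 2 / lam := by ring

theorem objective_perturbation_gap {d : ℕ}
    (O : EuclideanSpace ℝ (Fin d) → ℝ) (lam : ℝ) (hlam : 0 < lam)
    (hOdiff : Differentiable ℝ O)
    (hOsc : ConvexOn ℝ Set.univ (fun x => O x - (lam / 2) * ‖x‖ ^ 2))
    (ε f_priv f_opt : EuclideanSpace ℝ (Fin d))
    (hpriv : ∀ f, O f_priv + ⟪ε, f_priv⟫ ≤ O f + ⟪ε, f⟫)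
    (hopt : ∀ f, O f_opt ≤ O f) :
    O f_priv - O f_opt ≤ ‖ε‖ ^ 2 / lam :=
  objective_perturbation_gap_general O lam hlam hOsc ε f_priv f_opt hpriv hopt
end
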